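/- Let H be a finite-dimensional real inner product space, let β > 0, let C be a nonempty closed convex subset of H, let g : H → ℝ be convex and differentiable with β-Lipschitz gradient, assume that g attains its minimum over C, and set μ = min_{x ∈ C} g(x). Let x₀ ∈ C, let 0 < ε < 1/β, let (γₙ) be a sequence in [ε, 2/β − ε], and define xₙ₊₁ = proj_C(xₙ − γₙ ∇g(xₙ)). Then (g(xₙ)) is nonincreasing, g(xₙ) → μ, and ∑ₙ (g(xₙ) − μ) < +∞. -/

import Mathlib

/-!
For `p = proj_C (x - γ ∇g(x))` and every `y ∈ C`, the variational inequality of the projection,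
the gradient inequality of convexity and the descent lemma combine to
`2γ (g p - g y) ≤ ‖x - y‖² - ‖p - y‖² + (γβ - 1) ‖x - p‖²`.
With `y = x` and `γβ ≤ 2 - εβ` this is a decrease of `g` proportional to `‖x - p‖²`; with
`y = x⋆` and `γ ≥ ε` it shows that `ε β² ‖xₙ - x⋆‖² + 4 (g xₙ - μ)` drops by at least
`2 ε² β² (g xₙ₊₁ - μ)` at every step, so the gaps `g xₙ - μ` are summable and tend to `0`.
-/

open Filter Topology RealInnerProductSpace

section Gradient

variable {H : Type*} [NormedAddCommGroup H] [InnerProductSpace ℝ H] [CompleteSpace H]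
  {g : H → ℝ} {g' : H → H}

lemma HasGradientAt.hasDerivAt_comp_add_smul {v x d : H} {t : ℝ}
    (h : HasGradientAt g v (x + t • d)) :
    HasDerivAt (fun s : ℝ => g (x + s • d)) ⟪v, d⟫ t := by
  have hline : HasDerivAt (fun s : ℝ => x + s • d) d t := by
    simpa using ((hasDerivAt_id t).smul_const d).const_add x
  have := h.hasFDerivAt.comp_hasDerivAt t hline
  simp only [Function.comp_def, InnerProductSpace.toDual_apply_apply] at this
  exact this

lemma ConvexOn.add_inner_le_of_hasGradientAt {v x : H} (hg : ConvexOn ℝ Set.univ g)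
    (hgrad : HasGradientAt g v x) (y : H) :
    g x + ⟪v, y - x⟫ ≤ g y := by
  have hline : (fun t : ℝ => g (x + t • (y - x))) = g ∘ AffineMap.lineMap x y := by
    funext t
    simp [AffineMap.lineMap_apply, add_comm]
  have hconv : ConvexOn ℝ Set.univ fun t : ℝ => g (x + t • (y - x)) := by
    simpa [hline] using hg.comp_affineMap (AffineMap.lineMap x y)
  have hderiv : HasDerivAt (fun t : ℝ => g (x + t • (y - x))) ⟪v, y - x⟫ 0 :=
    HasGradientAt.hasDerivAt_comp_add_smul (by simpa using hgrad)
  have := hconv.le_slope_of_hasDerivAt (Set.mem_univ 0) (Set.mem_univ 1) one_pos hderiv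
  simp only [slope_def_field, one_smul, add_sub_cancel, zero_smul, add_zero, sub_zero,
    div_one] at this
  linarith

/-- The descent lemma. -/
lemma le_add_inner_gradient_add_sq_of_lipschitz {β : ℝ}
    (hgrad : ∀ z, HasGradientAt g (g' z) z)
    (hlip : ∀ z w, ‖g' z - g' w‖ ≤ β * ‖z - w‖) (x y : H) :
    g y ≤ g x + ⟪g' x, y - x⟫ + β / 2 * ‖y - x‖ ^ 2 := by
  set d := y - x
  have hderiv : ∀ t, HasDerivAt (fun t : ℝ => g (x + t • d)) ⟪g' (x + t • d), d⟫ t :=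
    fun t => (hgrad _).hasDerivAt_comp_add_smul
  have hbound : ∀ t ∈ Set.Ico (0 : ℝ) 1,
      ⟪g' (x + t • d), d⟫ ≤ ⟪g' x, d⟫ + β * ‖d‖ ^ 2 * t := by
    intro t ht
    have hlip_t : ‖g' (x + t • d) - g' x‖ ≤ β * (t * ‖d‖) := by
      simpa [norm_smul, abs_of_nonneg ht.1] using hlip (x + t • d) x
    calc ⟪g' (x + t • d), d⟫ = ⟪g' x, d⟫ + ⟪g' (x + t • d) - g' x, d⟫ := by
          rw [inner_sub_left]; ring
      _ ≤ ⟪g' x, d⟫ + ‖g' (x + t • d) - g' x‖ * ‖d‖ := by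
          gcongr; exact real_inner_le_norm _ _
      _ ≤ ⟪g' x, d⟫ + β * (t * ‖d‖) * ‖d‖ := by gcongr
      _ = ⟪g' x, d⟫ + β * ‖d‖ ^ 2 * t := by ring
  have hB : ∀ t, HasDerivAt (fun t : ℝ => g x + t * ⟪g' x, d⟫ + β / 2 * ‖d‖ ^ 2 * t ^ 2)
      (⟪g' x, d⟫ + β * ‖d‖ ^ 2 * t) t := by
    intro t
    have := (((hasDerivAt_id' t).mul_const ⟪g' x, d⟫).const_add (g x)).add
      ((hasDerivAt_pow 2 t).const_mul (β / 2 * ‖d‖ ^ 2))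
    exact this.congr_deriv (by push_cast; ring)
  have := image_le_of_deriv_right_le_deriv_boundary
    (fun t _ => (hderiv t).continuousAt.continuousWithinAt)
    (fun t _ => (hderiv t).hasDerivWithinAt) (by simp)
    (fun t _ => (hB t).continuousAt.continuousWithinAt)
    (fun t _ => (hB t).hasDerivWithinAt) hbound (Set.right_mem_Icc.2 zero_le_one)
  simpa [d] using this

end Gradient

section Projection

variable {H : Type*} [NormedAddCommGroup H] [InnerProductSpace ℝ H]

lemma real_inner_sub_le_zero_of_forall_norm_sub_le {C : Set H} (hC : Convex ℝ C) {z p : H}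
    (hp : p ∈ C) (hmin : ∀ w ∈ C, ‖z - p‖ ≤ ‖z - w‖) {w : H} (hw : w ∈ C) :
    ⟪z - p, w - p⟫ ≤ 0 := by
  have : Nonempty C := ⟨⟨p, hp⟩⟩
  have hinf : ‖z - p‖ = ⨅ w : C, ‖z - (w : H)‖ :=
    le_antisymm (le_ciInf fun w => hmin w w.2)
      (ciInf_le ⟨0, Set.forall_mem_range.2 fun _ => norm_nonneg _⟩ (⟨p, hp⟩ : C))
  exact (norm_eq_iInf_iff_real_inner_le_zero hC hp).1 hinf w hw

end Projection

section ProjectedGradientStep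

variable {H : Type*} [NormedAddCommGroup H] [InnerProductSpace ℝ H] [CompleteSpace H]
  {C : Set H} {g : H → ℝ} {g' : H → H} {β γ ε : ℝ} {x p : H}

/-- `hvi` is the variational inequality characterising `p = proj_C (x - γ ∇g(x))`. -/
lemma two_mul_sub_le_of_projected_gradient_step (hg : ConvexOn ℝ Set.univ g)
    (hgrad : ∀ z, HasGradientAt g (g' z) z) (hlip : ∀ z w, ‖g' z - g' w‖ ≤ β * ‖z - w‖)
    (hvi : ∀ w ∈ C, ⟪x - γ • g' x - p, w - p⟫ ≤ 0) (hγ : 0 ≤ γ) {y : H} (hy : y ∈ C) :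
    2 * γ * (g p - g y) ≤ ‖x - y‖ ^ 2 - ‖p - y‖ ^ 2 + (γ * β - 1) * ‖x - p‖ ^ 2 := by
  have hproj : ⟪x - p, y - p⟫ ≤ γ * ⟪g' x, y - p⟫ := by
    have := hvi y hy
    rw [sub_right_comm, inner_sub_left, real_inner_smul_left] at this
    linarith
  have hconv := hg.add_inner_le_of_hasGradientAt (hgrad x) y
  have hdesc := le_add_inner_gradient_add_sq_of_lipschitz hgrad hlip x p
  have hvalue : g p - g y ≤ ⟪g' x, p - y⟫ + β / 2 * ‖x - p‖ ^ 2 := by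
    have : ⟪g' x, p - y⟫ = ⟪g' x, p - x⟫ - ⟪g' x, y - x⟫ := by
      rw [← inner_sub_right, sub_sub_sub_cancel_right]
    rw [this, ← norm_neg (x - p), neg_sub]
    linarith
  have hpolar : 2 * ⟪x - p, y - p⟫ = ‖x - p‖ ^ 2 + ‖p - y‖ ^ 2 - ‖x - y‖ ^ 2 := by
    have := norm_sub_sq_real (x - p) (y - p)
    rw [sub_sub_sub_cancel_right, ← norm_neg (y - p), neg_sub] at this
    linarith
  have hinner : ⟪g' x, p - y⟫ = -⟪g' x, y - p⟫ := by rw [← inner_neg_right, neg_sub]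
  nlinarith [mul_le_mul_of_nonneg_left hvalue hγ]

lemma mul_le_two_sub_of_mem_Icc (hβ : 0 < β) (hγ : γ ∈ Set.Icc ε (2 / β - ε)) :
    γ * β ≤ 2 - ε * β := by
  have := mul_le_mul_of_nonneg_right hγ.2 hβ.le
  rwa [sub_mul, div_mul_cancel₀ _ hβ.ne'] at this

lemma mul_sq_norm_sub_le_of_projected_gradient_step (hg : ConvexOn ℝ Set.univ g)
    (hgrad : ∀ z, HasGradientAt g (g' z) z) (hlip : ∀ z w, ‖g' z - g' w‖ ≤ β * ‖z - w‖)
    (hvi : ∀ w ∈ C, ⟪x - γ • g' x - p, w - p⟫ ≤ 0) (hβ : 0 < β) (hε : 0 < ε)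
    (hγ : γ ∈ Set.Icc ε (2 / β - ε)) (hx : x ∈ C) :
    ε * β ^ 2 * ‖x - p‖ ^ 2 ≤ 4 * (g x - g p) := by
  have hγ_pos : 0 < γ := hε.trans_le hγ.1
  have hstep := two_mul_sub_le_of_projected_gradient_step hg hgrad hlip hvi hγ_pos.le hx
  rw [sub_self, norm_zero, ← norm_neg (p - x), neg_sub] at hstep
  have hγβ := mul_le_two_sub_of_mem_Icc hβ hγ
  have hdecr : ε * β * ‖x - p‖ ^ 2 ≤ 2 * γ * (g x - g p) := by nlinarith
  have hmono : 0 ≤ g x - g p :=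
    (mul_nonneg_iff_of_pos_left (by positivity)).1 (le_trans (by positivity) hdecr)
  nlinarith [mul_le_mul_of_nonneg_right hγβ hmono, mul_pos hε hβ]

lemma mul_sub_le_sub_of_projected_gradient_step (hg : ConvexOn ℝ Set.univ g)
    (hgrad : ∀ z, HasGradientAt g (g' z) z) (hlip : ∀ z w, ‖g' z - g' w‖ ≤ β * ‖z - w‖)
    (hvi : ∀ w ∈ C, ⟪x - γ • g' x - p, w - p⟫ ≤ 0) (hβ : 0 < β) (hε : 0 < ε)
    (hγ : γ ∈ Set.Icc ε (2 / β - ε)) (hx : x ∈ C) {y : H} (hy : y ∈ C) (hyp : g y ≤ g p) :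
    2 * ε ^ 2 * β ^ 2 * (g p - g y) ≤
      (ε * β ^ 2 * ‖x - y‖ ^ 2 + 4 * (g x - g y)) -
        (ε * β ^ 2 * ‖p - y‖ ^ 2 + 4 * (g p - g y)) := by
  have hstep := two_mul_sub_le_of_projected_gradient_step hg hgrad hlip hvi
    (hε.trans_le hγ.1).le hy
  have hdecr := mul_sq_norm_sub_le_of_projected_gradient_step hg hgrad hlip hvi hβ hε hγ hx
  have hγε := mul_le_mul_of_nonneg_right hγ.1 (sub_nonneg.2 hyp)
  have hγβ : γ * β ≤ 2 := by linarith [mul_le_two_sub_of_mem_Icc hβ hγ, mul_nonneg hε.le hβ.le]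
  have hfejer : 2 * ε * (g p - g y) ≤ ‖x - y‖ ^ 2 - ‖p - y‖ ^ 2 + ‖x - p‖ ^ 2 := by
    linarith [mul_le_mul_of_nonneg_right hγβ (sq_nonneg ‖x - p‖)]
  -- `hdecr` pays for the `‖x - p‖²` term of `hfejer`.
  nlinarith [mul_le_mul_of_nonneg_left hfejer (mul_pos hε (pow_pos hβ 2)).le]

end ProjectedGradientStep

lemma summable_of_le_sub_succ {u V : ℕ → ℝ} (hu : ∀ n, 0 ≤ u n) (hV : ∀ n, 0 ≤ V n)
    (h : ∀ n, u n ≤ V n - V (n + 1)) : Summable u := by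
  refine summable_of_sum_range_le (c := V 0) hu fun N => ?_
  calc ∑ n ∈ Finset.range N, u n ≤ ∑ n ∈ Finset.range N, (V n - V (n + 1)) :=
        Finset.sum_le_sum fun n _ => h n
    _ = V 0 - V N := Finset.sum_range_sub' V N
    _ ≤ V 0 := by linarith [hV N]

theorem projected_gradient_value_convergence_general
    {H : Type*} [NormedAddCommGroup H] [InnerProductSpace ℝ H] [FiniteDimensional ℝ H]
    (β : ℝ) (hβ : 0 < β)
    (C : Set H) (hC_convex : Convex ℝ C)
    (g : H → ℝ) (g' : H → H)
    (hg_convex : ConvexOn ℝ Set.univ g)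
    (hg_grad : ∀ z : H, HasGradientAt g (g' z) z)
    (hg_lip : ∀ z w : H, ‖g' z - g' w‖ ≤ β * ‖z - w‖)
    (xstar : H) (hxstar_mem : xstar ∈ C) (hxstar : ∀ y ∈ C, g xstar ≤ g y)
    (μ : ℝ) (hμ : μ = g xstar)
    (projC : H → H)
    (hproj : ∀ z : H, projC z ∈ C ∧ ∀ w ∈ C, ‖z - projC z‖ ≤ ‖z - w‖)
    (ε : ℝ) (hε : 0 < ε)
    (γ : ℕ → ℝ) (hγ : ∀ n, γ n ∈ Set.Icc ε (2/β - ε))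
    (x : ℕ → H) (hx0 : x 0 ∈ C)
    (hiter : ∀ n, x (n+1) = projC (x n - γ n • g' (x n))) :
    Antitone (fun n => g (x n)) ∧
      Tendsto (fun n => g (x n)) atTop (𝓝 μ) ∧
      Summable (fun n => g (x n) - μ) := by
  have hmem : ∀ n, x n ∈ C
    | 0 => hx0
    | n + 1 => hiter n ▸ (hproj _).1
  have hvi : ∀ n, ∀ w ∈ C, ⟪x n - γ n • g' (x n) - x (n + 1), w - x (n + 1)⟫ ≤ 0 :=
    fun n w hw => hiter n ▸ real_inner_sub_le_zero_of_forall_norm_sub_le hC_convex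
      (hproj _).1 (hproj _).2 hw
  have hdecrease : ∀ n, ε * β ^ 2 * ‖x n - x (n + 1)‖ ^ 2 ≤ 4 * (g (x n) - g (x (n + 1))) :=
    fun n => mul_sq_norm_sub_le_of_projected_gradient_step hg_convex hg_grad hg_lip (hvi n) hβ hε
      (hγ n) (hmem n)
  have hanti : Antitone fun n => g (x n) := antitone_nat_of_succ_le fun n => by
    nlinarith [hdecrease n, mul_nonneg (mul_pos hε (pow_pos hβ 2)).le (sq_nonneg ‖x n - x (n + 1)‖)]
  have hμ_le : ∀ n, μ ≤ g (x n) := fun n => hμ ▸ hxstar _ (hmem n)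
  have hsum_succ : Summable fun n => 2 * ε ^ 2 * β ^ 2 * (g (x (n + 1)) - μ) :=
    summable_of_le_sub_succ (fun n => by have := hμ_le (n + 1); positivity)
      (fun n => by have := hμ_le n; positivity) fun n => hμ ▸
        mul_sub_le_sub_of_projected_gradient_step hg_convex hg_grad hg_lip (hvi n) hβ hε (hγ n)
          (hmem n) hxstar_mem (hxstar _ (hmem (n + 1)))
  have hsum : Summable fun n => g (x n) - μ :=
    (summable_nat_add_iff 1).1 ((summable_mul_left_iff (by positivity)).1 hsum_succ)
  refine ⟨hanti, ?_, hsum⟩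
  simpa using hsum.tendsto_atTop_zero.add_const μ

/-- Monotone convergence of the values along the projected gradient iterates:
`g(xₙ)` is nonincreasing, converges to the optimal value `μ = min_C g`, and
`∑ₙ (g(xₙ) - μ) < +∞`. -/
theorem projected_gradient_value_convergence
    {H : Type*} [NormedAddCommGroup H] [InnerProductSpace ℝ H] [FiniteDimensional ℝ H]
    (β : ℝ) (hβ : 0 < β)
    (C : Set H) (hC_ne : C.Nonempty) (hC_closed : IsClosed C) (hC_convex : Convex ℝ C)
    (g : H → ℝ) (g' : H → H)
    (hg_convex : ConvexOn ℝ Set.univ g)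
    (hg_grad : ∀ z : H, HasGradientAt g (g' z) z)
    (hg_lip : ∀ z w : H, ‖g' z - g' w‖ ≤ β * ‖z - w‖)
    (xstar : H) (hxstar_mem : xstar ∈ C) (hxstar : ∀ y ∈ C, g xstar ≤ g y)
    (μ : ℝ) (hμ : μ = g xstar)
    (projC : H → H)
    (hproj : ∀ z : H, projC z ∈ C ∧ ∀ w ∈ C, ‖z - projC z‖ ≤ ‖z - w‖)
    (ε : ℝ) (hε : 0 < ε) (hεβ : ε < 1/β)
    (γ : ℕ → ℝ) (hγ : ∀ n, γ n ∈ Set.Icc ε (2/β - ε))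
    (x : ℕ → H) (hx0 : x 0 ∈ C)
    (hiter : ∀ n, x (n+1) = projC (x n - γ n • g' (x n))) :
    Antitone (fun n => g (x n)) ∧
      Tendsto (fun n => g (x n)) atTop (𝓝 μ) ∧
      Summable (fun n => g (x n) - μ) :=
  projected_gradient_value_convergence_general β hβ C hC_convex g g' hg_convex hg_grad hg_lip xstar
    hxstar_mem hxstar μ hμ projC hproj ε hε γ hγ x hx0 hiter
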